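/- arXiv:2507.17556 — 3 statements merged into one kernel-verified Lean document; each statement's English description precedes it below -/
import Mathlib

section
/- Let L_g > 0 and suppose each gradient ∇f_i is L_g-Lipschitz continuous on ℝⁿ and that for each i ∈ N there exists x_i* ∈ ℝⁿ with ∇f_i(x_i*) = 0. Let x ∈ ℝⁿ and D_0 ≥ 0 satisfy max_{i ∈ N} ‖x − x_i*‖ ≤ D_0. Then for every h ∈ [0,1] and every nonempty G ⊆ N with |G| ≥ ⌈(1−h)·d⌉, one has ‖∇f(x) − ∇f_G(x)‖ ≤ 2 h L_g D_0. -/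
open scoped RealInnerProductSpace

/-- The spectral (ℓ²-operator) norm of a real matrix. -/
noncomputable def specNorm {n : ℕ} (A : Matrix (Fin n) (Fin n) ℝ) : ℝ :=
  ‖Matrix.toEuclideanCLM (𝕜 := ℝ) A‖

/-- The smallest eigenvalue of a (Hermitian) real matrix. -/
noncomputable def lambdaMin {n : ℕ} (A : Matrix (Fin n) (Fin n) ℝ) : ℝ :=
  if h : A.IsHermitian then ⨅ i, h.eigenvalues i else 0

/-- The Hessian matrix of `f` at `x`, given by second directional derivatives. -/
noncomputable def hessian {n : ℕ} (f : EuclideanSpace ℝ (Fin n) → ℝ)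
    (x : EuclideanSpace ℝ (Fin n)) : Matrix (Fin n) (Fin n) ℝ :=
  fun i j => iteratedFDeriv ℝ 2 f x ![EuclideanSpace.single i 1, EuclideanSpace.single j 1]

open Finset

/-!
Writing `a` and `b` for the averages of the gradients `∇fᵢ(x)` over `G` and over its
complement, the full average is a convex combination of `a` and `b`, so
`∇f(x) - ∇f_G(x) = (#Gᶜ / d) • (b - a)`. Each `‖∇fᵢ(x)‖ = ‖∇fᵢ(x) - ∇fᵢ(xᵢ*)‖ ≤ L_g D₀`,
so `‖b - a‖ ≤ 2 L_g D₀`, while the cardinality bound on `G` gives `#Gᶜ / d ≤ h`.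
-/

theorem gradient_const_mul_sum {F ι : Type*} [NormedAddCommGroup F] [InnerProductSpace ℝ F]
    [CompleteSpace F] {f : ι → F → ℝ} {x : F} (S : Finset ι)
    (hf : ∀ i ∈ S, DifferentiableAt ℝ (f i) x) (c : ℝ) :
    gradient (fun y => c * ∑ i ∈ S, f i y) x = c • ∑ i ∈ S, gradient (f i) x := by
  have hsum : HasFDerivAt (fun y => c * ∑ i ∈ S, f i y)
      (c • ∑ i ∈ S, InnerProductSpace.toDual ℝ F (gradient (f i) x)) x :=
    (HasFDerivAt.fun_sum fun i hi => (hf i hi).hasGradientAt.hasFDerivAt).const_mul c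
  rw [(hasFDerivAt_iff_hasGradientAt.mp hsum).gradient, map_smul, map_sum]
  simp only [LinearIsometryEquiv.symm_apply_apply]

theorem norm_gradient_le_of_lipschitz_of_gradient_eq_zero {F : Type*} [NormedAddCommGroup F]
    [InnerProductSpace ℝ F] [CompleteSpace F] {f : F → ℝ} {L : ℝ}
    (hlip : ∀ y z, ‖gradient f y - gradient f z‖ ≤ L * ‖y - z‖) {xstar : F}
    (hstar : gradient f xstar = 0) (x : F) : ‖gradient f x‖ ≤ L * ‖x - xstar‖ := by
  simpa [hstar] using hlip x xstar

section Averages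

variable {ι E : Type*} [NormedAddCommGroup E] [NormedSpace ℝ E]

theorem Finset.card_smul_inv_card_smul_sum (S : Finset ι) (g : ι → E) :
    (#S : ℝ) • ((#S : ℝ)⁻¹ • ∑ i ∈ S, g i) = ∑ i ∈ S, g i := by
  rcases S.eq_empty_or_nonempty with rfl | hS
  · simp
  · exact smul_inv_smul₀ (by positivity) _

theorem Finset.norm_inv_card_smul_sum_le {S : Finset ι} {g : ι → E} {B : ℝ} (hB : 0 ≤ B)
    (hg : ∀ i ∈ S, ‖g i‖ ≤ B) : ‖(#S : ℝ)⁻¹ • ∑ i ∈ S, g i‖ ≤ B := by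
  rcases S.eq_empty_or_nonempty with rfl | hS
  · simpa using hB
  have hcard : (0 : ℝ) < #S := by exact_mod_cast hS.card_pos
  rw [norm_smul, norm_inv, Real.norm_natCast, inv_mul_le_iff₀ hcard]
  calc ‖∑ i ∈ S, g i‖ ≤ ∑ i ∈ S, ‖g i‖ := norm_sum_le _ _
    _ ≤ #S * B := by simpa using Finset.sum_le_sum hg

variable [Fintype ι] [DecidableEq ι]

/-- Valid also when `G` or `Gᶜ` is empty: the junk average `0` is then multiplied by `0` in
`card_smul_inv_card_smul_sum`. -/
theorem inv_card_smul_sum_sub_inv_card_smul_sum [Nonempty ι] (G : Finset ι) (g : ι → E) :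
    (Fintype.card ι : ℝ)⁻¹ • ∑ i, g i - (#G : ℝ)⁻¹ • ∑ i ∈ G, g i
      = ((#Gᶜ : ℝ) / Fintype.card ι) •
          ((#Gᶜ : ℝ)⁻¹ • ∑ i ∈ Gᶜ, g i - (#G : ℝ)⁻¹ • ∑ i ∈ G, g i) := by
  set a := (#G : ℝ)⁻¹ • ∑ i ∈ G, g i
  set b := (#Gᶜ : ℝ)⁻¹ • ∑ i ∈ Gᶜ, g i
  have hN : (Fintype.card ι : ℝ)⁻¹ * (#G + #Gᶜ) = 1 := by
    rw [← Nat.cast_add, card_add_card_compl, inv_mul_cancel₀ (by positivity)]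
  rw [← sum_add_sum_compl G, ← G.card_smul_inv_card_smul_sum, ← Gᶜ.card_smul_inv_card_smul_sum]
  linear_combination (norm := module) hN • a

theorem norm_inv_card_smul_sum_sub_inv_card_smul_sum_le [Nonempty ι] (G : Finset ι)
    {g : ι → E} {B : ℝ} (hg : ∀ i, ‖g i‖ ≤ B) :
    ‖(Fintype.card ι : ℝ)⁻¹ • ∑ i, g i - (#G : ℝ)⁻¹ • ∑ i ∈ G, g i‖
      ≤ 2 * (#Gᶜ / Fintype.card ι) * B := by
  have hB : 0 ≤ B := (norm_nonneg _).trans (hg (Classical.arbitrary ι))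
  rw [inv_card_smul_sum_sub_inv_card_smul_sum, norm_smul, Real.norm_of_nonneg (by positivity)]
  calc _ ≤ (#Gᶜ / Fintype.card ι : ℝ) * (B + B) := by
        gcongr
        exact (norm_sub_le _ _).trans <| add_le_add
          (norm_inv_card_smul_sum_le hB fun i _ => hg i)
          (norm_inv_card_smul_sum_le hB fun i _ => hg i)
    _ = _ := by ring

end Averages

theorem stmt_2_general {n d : ℕ} [NeZero d]
    (f : Fin d → EuclideanSpace ℝ (Fin n) → ℝ)
    (hf : ∀ i, ContDiff ℝ 2 (f i))
    (Lg : ℝ) (hLg : 0 < Lg)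
    (hlip : ∀ i, ∀ y z : EuclideanSpace ℝ (Fin n),
      ‖gradient (f i) y - gradient (f i) z‖ ≤ Lg * ‖y - z‖)
    (xstar : Fin d → EuclideanSpace ℝ (Fin n))
    (hstar : ∀ i, gradient (f i) (xstar i) = 0)
    (x : EuclideanSpace ℝ (Fin n)) (D0 : ℝ) (hD0 : 0 ≤ D0)
    (hDx : ∀ i, ‖x - xstar i‖ ≤ D0)
    (h : ℝ)
    (G : Finset (Fin d))
    (hcard : ⌈(1 - h) * (d : ℝ)⌉₊ ≤ G.card) :
    ‖gradient (fun y => (d : ℝ)⁻¹ * ∑ i, f i y) x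
        - gradient (fun y => ((G.card : ℝ))⁻¹ * ∑ i ∈ G, f i y) x‖
      ≤ 2 * h * Lg * D0 := by
  have hdiff : ∀ i ∈ (univ : Finset (Fin d)), DifferentiableAt ℝ (f i) x :=
    fun i _ => ((hf i).differentiable two_ne_zero).differentiableAt
  have hgrad : ∀ i, ‖gradient (f i) x‖ ≤ Lg * D0 := fun i =>
    (norm_gradient_le_of_lipschitz_of_gradient_eq_zero (hlip i) (hstar i) x).trans
      (mul_le_mul_of_nonneg_left (hDx i) hLg.le)
  have hfrac : (#Gᶜ : ℝ) / d ≤ h := by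
    have hG : (1 - h) * d ≤ #G := (Nat.le_ceil _).trans (by exact_mod_cast hcard)
    have hGc : (#Gᶜ : ℝ) = d - #G := by
      rw [eq_sub_iff_add_eq, ← Nat.cast_add, card_compl_add_card, Fintype.card_fin]
    rw [div_le_iff₀ (Nat.cast_pos.mpr (NeZero.pos d)), hGc]
    linarith
  rw [gradient_const_mul_sum _ hdiff, gradient_const_mul_sum _ fun i _ => hdiff i (mem_univ i)]
  calc _ ≤ 2 * (#Gᶜ / d) * (Lg * D0) := by
        simpa using norm_inv_card_smul_sum_sub_inv_card_smul_sum_le G hgrad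
    _ ≤ 2 * h * (Lg * D0) := by gcongr
    _ = 2 * h * Lg * D0 := by ring

theorem stmt_2 {n d : ℕ} (hn : 1 ≤ n) [NeZero d]
    (f : Fin d → EuclideanSpace ℝ (Fin n) → ℝ)
    (hf : ∀ i, ContDiff ℝ 2 (f i))
    (Lg : ℝ) (hLg : 0 < Lg)
    (hlip : ∀ i, ∀ y z : EuclideanSpace ℝ (Fin n),
      ‖gradient (f i) y - gradient (f i) z‖ ≤ Lg * ‖y - z‖)
    (xstar : Fin d → EuclideanSpace ℝ (Fin n))
    (hstar : ∀ i, gradient (f i) (xstar i) = 0)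
    (x : EuclideanSpace ℝ (Fin n)) (D0 : ℝ) (hD0 : 0 ≤ D0)
    (hDx : ∀ i, ‖x - xstar i‖ ≤ D0)
    (h : ℝ) (hh0 : 0 ≤ h) (hh1 : h ≤ 1)
    (G : Finset (Fin d)) (hG : G.Nonempty)
    (hcard : ⌈(1 - h) * (d : ℝ)⌉₊ ≤ G.card) :
    ‖gradient (fun y => (d : ℝ)⁻¹ * ∑ i, f i y) x
        - gradient (fun y => ((G.card : ℝ))⁻¹ * ∑ i ∈ G, f i y) x‖
      ≤ 2 * h * Lg * D0 :=
  stmt_2_general f hf Lg hLg hlip xstar hstar x D0 hD0 hDx h G hcard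
end

section
/- Let L_g > 0, x ∈ ℝⁿ, and suppose ‖∇²f_i(x)‖ ≤ L_g for every i ∈ N, where ‖·‖ is the spectral norm. Then for every h ∈ [0,1] and every nonempty H ⊆ N with |H| ≥ ⌈(1−h)·d⌉, one has −λ_min(∇²f(x)) ≤ −λ_min(∇²f_H(x)) + 2 h L_g. -/
open scoped RealInnerProductSpace

/-! The smallest eigenvalue is 1-Lipschitz for the spectral norm: testing the Rayleigh quotient of
`B` on a unit eigenvector of `A` for `λ_min(A)` gives `λ_min(B) ≤ λ_min(A) + ‖A - B‖`. So it suffices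
to bound `‖∇²f(x) - ∇²f_H(x)‖`. Writing the full sum as `S_H + S_{Hᶜ}`, the difference of the averages
is `(1/d - 1/|H|) S_H + (1/d) S_{Hᶜ}`, of norm at most `2 (1 - |H|/d) L_g`, and the cardinality
assumption says exactly that `1 - |H|/d ≤ h`. -/

section LambdaMin

variable {n : ℕ} {A B : Matrix (Fin n) (Fin n) ℝ}

lemma toEuclideanCLM_eigenvectorBasis (hA : A.IsHermitian) (j : Fin n) :
    Matrix.toEuclideanCLM (𝕜 := ℝ) A (hA.eigenvectorBasis j) =
      hA.eigenvalues j • hA.eigenvectorBasis j := by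
  apply (WithLp.equiv 2 (Fin n → ℝ)).injective
  simpa using hA.mulVec_eigenvectorBasis j

lemma lambdaMin_le_eigenvalues (hA : A.IsHermitian) (i : Fin n) :
    lambdaMin A ≤ hA.eigenvalues i := by
  rw [lambdaMin, dif_pos hA]
  exact ciInf_le (Finite.bddBelow_range _) i

lemma inner_toEuclideanCLM_self_eq_sum (hA : A.IsHermitian) (v : EuclideanSpace ℝ (Fin n)) :
    ⟪v, Matrix.toEuclideanCLM (𝕜 := ℝ) A v⟫ =
      ∑ i, hA.eigenvalues i * ⟪hA.eigenvectorBasis i, v⟫ ^ 2 := by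
  rw [← hA.eigenvectorBasis.sum_inner_mul_inner]
  refine Finset.sum_congr rfl fun i _ => ?_
  have hsymm : ⟪hA.eigenvectorBasis i, Matrix.toEuclideanCLM (𝕜 := ℝ) A v⟫ =
      ⟪Matrix.toEuclideanCLM (𝕜 := ℝ) A (hA.eigenvectorBasis i), v⟫ :=
    (Matrix.isSymmetric_toEuclideanLin_iff.2 hA _ v).symm
  rw [hsymm, toEuclideanCLM_eigenvectorBasis, real_inner_smul_left, real_inner_comm v]
  ring

lemma lambdaMin_mul_norm_sq_le_inner (hA : A.IsHermitian) (v : EuclideanSpace ℝ (Fin n)) :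
    lambdaMin A * ‖v‖ ^ 2 ≤ ⟪v, Matrix.toEuclideanCLM (𝕜 := ℝ) A v⟫ := by
  rw [inner_toEuclideanCLM_self_eq_sum hA, ← hA.eigenvectorBasis.sum_sq_inner_right, Finset.mul_sum]
  gcongr with i
  exact lambdaMin_le_eigenvalues hA i

lemma exists_norm_eq_one_inner_eq_lambdaMin [Nonempty (Fin n)] (hA : A.IsHermitian) :
    ∃ v : EuclideanSpace ℝ (Fin n), ‖v‖ = 1 ∧
      ⟪v, Matrix.toEuclideanCLM (𝕜 := ℝ) A v⟫ = lambdaMin A := by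
  obtain ⟨i, hi⟩ := exists_eq_ciInf_of_finite (f := hA.eigenvalues)
  refine ⟨hA.eigenvectorBasis i, hA.eigenvectorBasis.orthonormal.1 i, ?_⟩
  rw [toEuclideanCLM_eigenvectorBasis hA i, real_inner_smul_right, real_inner_self_eq_norm_sq,
    hA.eigenvectorBasis.orthonormal.1 i, lambdaMin, dif_pos hA, ← hi, one_pow, mul_one]

lemma lambdaMin_le_lambdaMin_add_specNorm_sub (hA : A.IsHermitian) (hB : B.IsHermitian) :
    lambdaMin B ≤ lambdaMin A + specNorm (A - B) := by
  rcases isEmpty_or_nonempty (Fin n) with hn | hn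
  · simp only [lambdaMin, dif_pos hA, dif_pos hB, Real.iInf_of_isEmpty, zero_add]
    exact norm_nonneg _
  obtain ⟨v, hv, hvA⟩ := exists_norm_eq_one_inner_eq_lambdaMin hA
  set T := Matrix.toEuclideanCLM (𝕜 := ℝ) (A - B)
  have hT : |⟪v, T v⟫| ≤ specNorm (A - B) :=
    calc |⟪v, T v⟫| ≤ ‖v‖ * ‖T v‖ := abs_real_inner_le_norm _ _
      _ ≤ ‖v‖ * (‖T‖ * ‖v‖) := by gcongr; exact T.le_opNorm v
      _ = specNorm (A - B) := by rw [hv, one_mul, mul_one]; rfl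
  have hB' := lambdaMin_mul_norm_sq_le_inner hB v
  simp only [T, map_sub, sub_apply, inner_sub_right] at hT
  rw [hv, one_pow, mul_one] at hB'
  linarith [neg_le_of_abs_le hT]

end LambdaMin

section Hessian

variable {n : ℕ}

lemma isHermitian_hessian {f : EuclideanSpace ℝ (Fin n) → ℝ} {x : EuclideanSpace ℝ (Fin n)}
    (hf : ContDiffAt ℝ 2 f x) : (hessian f x).IsHermitian := by
  have hsymm : IsSymmSndFDerivAt ℝ f x := hf.isSymmSndFDerivAt (by simp)
  refine Matrix.ext fun i j => ?_
  simpa [hessian, iteratedFDeriv_two_apply] using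
    hsymm (EuclideanSpace.single j 1) (EuclideanSpace.single i 1)

lemma hessian_const_mul_sum {ι : Type*} (c : ℝ) (f : ι → EuclideanSpace ℝ (Fin n) → ℝ)
    (s : Finset ι) {x : EuclideanSpace ℝ (Fin n)} (hf : ∀ i ∈ s, ContDiffAt ℝ 2 (f i) x) :
    hessian (fun y => c * ∑ i ∈ s, f i y) x = c • ∑ i ∈ s, hessian (f i) x := by
  ext i j
  simp only [hessian, ← smul_eq_mul (a := c),
    iteratedFDeriv_const_smul_apply' (ContDiffAt.sum hf), iteratedFDeriv_fun_sum_apply hf]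
  simp [hessian, Matrix.sum_apply]

end Hessian

lemma abs_inv_sub_inv_mul_le {m d : ℝ} (hm : 0 ≤ m) (hmd : m ≤ d) :
    |d⁻¹ - m⁻¹| * m ≤ 1 - m / d := by
  rcases hm.eq_or_lt with rfl | hm
  · simp
  rw [abs_sub_comm, abs_of_nonneg (sub_nonneg.2 (inv_anti₀ hm hmd))]
  field_simp
  rfl

lemma norm_average_sub_average_le {ι E : Type*} [Fintype ι] [Nonempty ι]
    [SeminormedAddCommGroup E] [NormedSpace ℝ E] {v : ι → E} {L : ℝ} (hv : ∀ i, ‖v i‖ ≤ L)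
    (s : Finset ι) :
    ‖(Fintype.card ι : ℝ)⁻¹ • ∑ i, v i - (s.card : ℝ)⁻¹ • ∑ i ∈ s, v i‖ ≤
      2 * (1 - s.card / Fintype.card ι) * L := by
  classical
  set d : ℝ := (Fintype.card ι : ℝ)
  set m : ℝ := (s.card : ℝ)
  have hL : 0 ≤ L := (norm_nonneg _).trans (hv (Classical.arbitrary ι))
  have hd : 0 < d := Nat.cast_pos.2 Fintype.card_pos
  have hmd : m ≤ d := Nat.cast_le.2 s.card_le_univ
  have hS : ‖∑ i ∈ s, v i‖ ≤ m * L := by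
    simpa using norm_sum_le_of_le s fun i _ => hv i
  have hT : ‖∑ i ∈ sᶜ, v i‖ ≤ (d - m) * L := by
    simpa [Finset.card_compl, Nat.cast_sub s.card_le_univ] using
      norm_sum_le_of_le sᶜ fun i _ => hv i
  calc ‖d⁻¹ • ∑ i, v i - m⁻¹ • ∑ i ∈ s, v i‖
      = ‖(d⁻¹ - m⁻¹) • ∑ i ∈ s, v i + d⁻¹ • ∑ i ∈ sᶜ, v i‖ := by
        rw [← Finset.sum_add_sum_compl s]; congr 1; module
    _ ≤ |d⁻¹ - m⁻¹| * (m * L) + d⁻¹ * ((d - m) * L) := by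
        refine (norm_add_le _ _).trans ?_
        rw [norm_smul, norm_smul, Real.norm_eq_abs, Real.norm_of_nonneg (inv_nonneg.2 hd.le)]
        gcongr
    _ ≤ (1 - m / d) * L + (1 - m / d) * L := by
        refine add_le_add ?_ (le_of_eq ?_)
        · rw [← mul_assoc]
          exact mul_le_mul_of_nonneg_right (abs_inv_sub_inv_mul_le (Nat.cast_nonneg _) hmd) hL
        · field_simp
    _ = 2 * (1 - m / d) * L := by ring

theorem stmt_3_general {n d : ℕ} [NeZero d]
    (f : Fin d → EuclideanSpace ℝ (Fin n) → ℝ)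
    (hf : ∀ i, ContDiff ℝ 2 (f i))
    (Lg : ℝ) (hLg : 0 < Lg)
    (x : EuclideanSpace ℝ (Fin n))
    (hhess : ∀ i, specNorm (hessian (f i) x) ≤ Lg)
    (h : ℝ)
    (H : Finset (Fin d))
    (hcard : ⌈(1 - h) * (d : ℝ)⌉₊ ≤ H.card) :
    -lambdaMin (hessian (fun y => (d : ℝ)⁻¹ * ∑ i, f i y) x)
      ≤ -lambdaMin (hessian (fun y => ((H.card : ℝ))⁻¹ * ∑ i ∈ H, f i y) x) + 2 * h * Lg := by
  have hfx : ∀ s : Finset (Fin d), ∀ i ∈ s, ContDiffAt ℝ 2 (f i) x :=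
    fun _ i _ => (hf i).contDiffAt
  have hsmooth (c : ℝ) (s : Finset (Fin d)) : ContDiffAt ℝ 2 (fun y => c * ∑ i ∈ s, f i y) x :=
    contDiffAt_const.mul (ContDiffAt.sum (hfx s))
  have hH : 1 - (H.card : ℝ) / d ≤ h := by
    rw [sub_le_comm, le_div_iff₀ (Nat.cast_pos.2 (NeZero.pos d))]
    exact (Nat.le_ceil _).trans (Nat.cast_le.2 hcard)
  have hnorm : specNorm (hessian (fun y => (d : ℝ)⁻¹ * ∑ i, f i y) x -
      hessian (fun y => ((H.card : ℝ))⁻¹ * ∑ i ∈ H, f i y) x) ≤ 2 * h * Lg := by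
    rw [hessian_const_mul_sum _ _ _ (hfx _), hessian_const_mul_sum _ _ _ (hfx _)]
    calc _ = ‖(Fintype.card (Fin d) : ℝ)⁻¹ • ∑ i, Matrix.toEuclideanCLM (𝕜 := ℝ) (hessian (f i) x)
          - (H.card : ℝ)⁻¹ • ∑ i ∈ H, Matrix.toEuclideanCLM (𝕜 := ℝ) (hessian (f i) x)‖ := by
          simp only [specNorm, map_sub, map_smul, map_sum, Fintype.card_fin]
      _ ≤ 2 * (1 - H.card / Fintype.card (Fin d)) * Lg := norm_average_sub_average_le hhess H
      _ ≤ 2 * h * Lg := by rw [Fintype.card_fin]; gcongr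
  have hlip := lambdaMin_le_lambdaMin_add_specNorm_sub
    (isHermitian_hessian (hsmooth (d : ℝ)⁻¹ .univ)) (isHermitian_hessian (hsmooth (H.card : ℝ)⁻¹ H))
  linarith

theorem stmt_3 {n d : ℕ} (hn : 1 ≤ n) [NeZero d]
    (f : Fin d → EuclideanSpace ℝ (Fin n) → ℝ)
    (hf : ∀ i, ContDiff ℝ 2 (f i))
    (Lg : ℝ) (hLg : 0 < Lg)
    (x : EuclideanSpace ℝ (Fin n))
    (hhess : ∀ i, specNorm (hessian (f i) x) ≤ Lg)
    (h : ℝ) (hh0 : 0 ≤ h) (hh1 : h ≤ 1)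
    (H : Finset (Fin d)) (hH : H.Nonempty)
    (hcard : ⌈(1 - h) * (d : ℝ)⌉₊ ≤ H.card) :
    -lambdaMin (hessian (fun y => (d : ℝ)⁻¹ * ∑ i, f i y) x)
      ≤ -lambdaMin (hessian (fun y => ((H.card : ℝ))⁻¹ * ∑ i ∈ H, f i y) x) + 2 * h * Lg :=
  stmt_3_general f hf Lg hLg x hhess h H hcard
end

section
/- (Second-order sufficient condition for a successful iteration.) Let f : ℝⁿ → ℝ be twice continuously differentiable with L_g-Lipschitz gradient and L_H-Lipschitz Hessian (L_g, L_H > 0). Let α ∈ (0,1), ε_g, ε_H > 0, D_0 ≥ 0, 0 < Δ ≤ Δ_max, x, g, u ∈ ℝⁿ, and let B be a symmetric n×n matrix. Assume: (i) ‖g − ∇f(x)‖ ≤ 2 L_g D_0 (Δ/Δ_max)²; (ii) ‖B‖ ≤ L_g; (iii) ‖u‖ ≤ Δ; (iv) with m(v) := f(x) + ⟨g, v⟩ + ½⟨B v, v⟩, one has m(0) − m(u) ≥ max{ ½‖g‖ min{Δ, ‖g‖/L_g}, −λ_min(B) Δ² }; (v) either ‖g‖ > 4ε_g/5, or both −λ_min(B)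 > 4ε_H/5 and ‖B − ∇²f(x)‖ ≤ 2 L_g (Δ/Δ_max); and (vi) Δ ≤ min{ 2(1−α)ε_g / (5 [1 + 2 D_0/Δ_max] L_g), 4(1−α)ε_H / (5 [L_H/6 + 2(D_0/Δ_max + 1)(L_g/Δ_max)] ) }. Then f(x) − f(x+u) ≥ α (m(0) − m(u)); that is, the trust-region ratio ρ = (f(x) − f(x+u))/(m(0) − m(u)) satisfies ρ ≥ α. -/
open scoped RealInnerProductSpace

/-!
Taylor's theorem bounds the model error `f (x + u) - m u`: with a Lipschitz gradient by
`‖g - ∇f x‖ Δ + L_g Δ²`, with a Lipschitz Hessian by `‖g - ∇f x‖ Δ + ½ ‖B - ∇²f x‖ Δ² + L_H Δ³ / 6`.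
By (i), (v) and (vi) the first bound is at most `1 - α` times the Cauchy decrease `½ ‖g‖ Δ`
when `‖g‖` is large, and the second at most `1 - α` times the curvature decrease `-λ_min(B) Δ²`
when `B` has a sufficiently negative eigenvalue. Since
`f x - f (x + u) = (m 0 - m u) - (f (x + u) - m u)`, this is `ρ ≥ α`.
-/

open Set

theorem sub_le_sub_of_hasDerivAt_le {φ ψ φ' ψ' : ℝ → ℝ} {a b : ℝ} (hab : a ≤ b)
    (hφ : ∀ t, HasDerivAt φ (φ' t) t) (hψ : ∀ t, HasDerivAt ψ (ψ' t) t)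
    (h : ∀ t ∈ Icc a b, φ' t ≤ ψ' t) : φ b - φ a ≤ ψ b - ψ a := by
  have hmono : MonotoneOn (fun t => ψ t - φ t) (Icc a b) :=
    monotoneOn_of_hasDerivWithinAt_nonneg (convex_Icc a b)
      (fun t _ => ((hψ t).sub (hφ t)).continuousAt.continuousWithinAt)
      (fun t _ => ((hψ t).sub (hφ t)).hasDerivWithinAt)
      (fun t ht => sub_nonneg.mpr (h t (interior_subset ht)))
  have := hmono (left_mem_Icc.mpr hab) (right_mem_Icc.mpr hab) hab
  simp only at this
  linarith

section Taylor

variable {E F : Type*} [NormedAddCommGroup E] [NormedSpace ℝ E]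
  [NormedAddCommGroup F] [NormedSpace ℝ F]

theorem hasDerivAt_comp_add_smul {g : E → F} (hg : Differentiable ℝ g) (x u : E) (t : ℝ) :
    HasDerivAt (fun s : ℝ => g (x + s • u)) (fderiv ℝ g (x + t • u) u) t := by
  have hline : HasDerivAt (fun s : ℝ => x + s • u) u t := by
    simpa using ((hasDerivAt_id t).smul_const u).const_add x
  exact (hg _).hasFDerivAt.comp_hasDerivAt t hline

theorem le_taylor_one_of_lipschitz_fderiv {f : E → ℝ} {L : ℝ} (hf : Differentiable ℝ f)
    (hL : ∀ y z, ‖fderiv ℝ f y - fderiv ℝ f z‖ ≤ L * ‖y - z‖) (x u : E) :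
    f (x + u) ≤ f x + fderiv ℝ f x u + L / 2 * ‖u‖ ^ 2 := by
  have hψ (t : ℝ) : HasDerivAt (fun s : ℝ => s * fderiv ℝ f x u + L / 2 * s ^ 2 * ‖u‖ ^ 2)
      (fderiv ℝ f x u + L * t * ‖u‖ ^ 2) t := by
    refine (((hasDerivAt_id' t).mul_const (fderiv ℝ f x u)).add
      (((hasDerivAt_pow 2 t).const_mul (L / 2)).mul_const (‖u‖ ^ 2))).congr_deriv ?_
    push_cast; ring
  have key := sub_le_sub_of_hasDerivAt_le zero_le_one (hasDerivAt_comp_add_smul hf x u) hψ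
    fun t ht => by
      have hnorm : ‖x + t • u - x‖ = t * ‖u‖ := by
        rw [add_sub_cancel_left, norm_smul, Real.norm_of_nonneg ht.1]
      calc fderiv ℝ f (x + t • u) u
          = fderiv ℝ f x u + (fderiv ℝ f (x + t • u) - fderiv ℝ f x) u := by simp
        _ ≤ fderiv ℝ f x u + L * (t * ‖u‖) * ‖u‖ := by
          gcongr
          calc (fderiv ℝ f (x + t • u) - fderiv ℝ f x) u
              ≤ ‖fderiv ℝ f (x + t • u) - fderiv ℝ f x‖ * ‖u‖ :=
                (Real.le_norm_self _).trans (ContinuousLinearMap.le_opNorm _ u)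
            _ ≤ L * (t * ‖u‖) * ‖u‖ := by rw [← hnorm]; gcongr; exact hL _ _
        _ = fderiv ℝ f x u + L * t * ‖u‖ ^ 2 := by ring
  simp only [one_smul, zero_smul, add_zero] at key
  linarith

theorem le_taylor_two_of_lipschitz_fderiv_fderiv {f : E → ℝ} {L : ℝ} (hf : Differentiable ℝ f)
    (hf' : Differentiable ℝ (fderiv ℝ f))
    (hL : ∀ y z, ‖fderiv ℝ (fderiv ℝ f) y - fderiv ℝ (fderiv ℝ f) z‖ ≤ L * ‖y - z‖) (x u : E) :
    f (x + u) ≤ f x + fderiv ℝ f x u + 1 / 2 * fderiv ℝ (fderiv ℝ f) x u u + L / 6 * ‖u‖ ^ 3 := by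
  set D2 := fderiv ℝ (fderiv ℝ f)
  have hDf (s : ℝ) : HasDerivAt (fun r : ℝ => fderiv ℝ f (x + r • u) u) (D2 (x + s • u) u u) s := by
    simpa using (hasDerivAt_comp_add_smul hf' x u s).clm_apply (hasDerivAt_const s u)
  have hψ₁ (s : ℝ) : HasDerivAt (fun r : ℝ => r * D2 x u u + L / 2 * r ^ 2 * ‖u‖ ^ 3)
      (D2 x u u + L * s * ‖u‖ ^ 3) s :=
    (((hasDerivAt_id' s).mul_const _).add
      (((hasDerivAt_pow 2 s).const_mul (L / 2)).mul_const _)).congr_deriv (by push_cast; ring)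
  have hψ (t : ℝ) : HasDerivAt
      (fun r : ℝ => r * fderiv ℝ f x u + r ^ 2 / 2 * D2 x u u + L / 6 * r ^ 3 * ‖u‖ ^ 3)
      (fderiv ℝ f x u + t * D2 x u u + L / 2 * t ^ 2 * ‖u‖ ^ 3) t :=
    ((((hasDerivAt_id' t).mul_const _).add (((hasDerivAt_pow 2 t).div_const 2).mul_const _)).add
      (((hasDerivAt_pow 3 t).const_mul (L / 6)).mul_const _)).congr_deriv (by push_cast; ring)
  have hD2 (s : ℝ) (hs : 0 ≤ s) : D2 (x + s • u) u u ≤ D2 x u u + L * s * ‖u‖ ^ 3 := by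
    have hnorm : ‖x + s • u - x‖ = s * ‖u‖ := by
      rw [add_sub_cancel_left, norm_smul, Real.norm_of_nonneg hs]
    calc D2 (x + s • u) u u = D2 x u u + (D2 (x + s • u) - D2 x) u u := by simp
      _ ≤ D2 x u u + ‖D2 (x + s • u) - D2 x‖ * ‖u‖ * ‖u‖ := by
          gcongr
          exact (Real.le_norm_self _).trans (ContinuousLinearMap.le_opNorm₂ _ u u)
      _ ≤ D2 x u u + L * (s * ‖u‖) * ‖u‖ * ‖u‖ := by rw [← hnorm]; gcongr; exact hL _ _
      _ = D2 x u u + L * s * ‖u‖ ^ 3 := by ring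
  have key := sub_le_sub_of_hasDerivAt_le zero_le_one (hasDerivAt_comp_add_smul hf x u) hψ
    fun t ht => by
      have := sub_le_sub_of_hasDerivAt_le ht.1 hDf hψ₁ fun s hs => hD2 s hs.1
      simp only [zero_smul, add_zero] at this
      linarith
  simp only [one_smul, zero_smul, add_zero] at key
  linarith
end Taylor

section Gradient

variable {E : Type*} [NormedAddCommGroup E] [InnerProductSpace ℝ E]

theorem inner_sub_inner_le_norm_sub_mul_norm (a b u : E) : ⟪a, u⟫ - ⟪b, u⟫ ≤ ‖b - a‖ * ‖u‖ := by
  rw [← inner_sub_left, norm_sub_rev]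
  exact real_inner_le_norm _ _

theorem norm_fderiv_sub_fderiv [CompleteSpace E] (f : E → ℝ) (y z : E) :
    ‖fderiv ℝ f y - fderiv ℝ f z‖ = ‖gradient f y - gradient f z‖ := by
  rw [← toDual_gradient, ← toDual_gradient, ← map_sub, LinearIsometryEquiv.norm_map]

end Gradient

section SpectralNorm

variable {n : ℕ}

theorem specNorm_nonneg (A : Matrix (Fin n) (Fin n) ℝ) : 0 ≤ specNorm A := norm_nonneg _

theorem specNorm_sub_comm (A B : Matrix (Fin n) (Fin n) ℝ) :
    specNorm (A - B) = specNorm (B - A) := by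
  simp only [specNorm, map_sub, norm_sub_rev]

theorem abs_inner_toEuclideanCLM_le_specNorm (A : Matrix (Fin n) (Fin n) ℝ)
    (v w : EuclideanSpace ℝ (Fin n)) :
    |⟪v, Matrix.toEuclideanCLM (𝕜 := ℝ) A w⟫| ≤ specNorm A * ‖v‖ * ‖w‖ :=
  calc |⟪v, Matrix.toEuclideanCLM (𝕜 := ℝ) A w⟫| ≤ ‖v‖ * ‖Matrix.toEuclideanCLM (𝕜 := ℝ) A w‖ :=
        abs_real_inner_le_norm _ _
    _ ≤ ‖v‖ * (specNorm A * ‖w‖) := by gcongr; exact ContinuousLinearMap.le_opNorm _ _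
    _ = specNorm A * ‖v‖ * ‖w‖ := by ring

theorem fderiv_fderiv_apply_eq_inner_hessian (f : EuclideanSpace ℝ (Fin n) → ℝ)
    (y v w : EuclideanSpace ℝ (Fin n)) :
    fderiv ℝ (fderiv ℝ f) y v w = ⟪v, Matrix.toEuclideanCLM (𝕜 := ℝ) (hessian f y) w⟫ := by
  have hexp (v : EuclideanSpace ℝ (Fin n)) : v = ∑ i, v i • EuclideanSpace.single i (1 : ℝ) := by
    simpa using ((EuclideanSpace.basisFun (Fin n) ℝ).sum_repr v).symm
  conv_lhs => rw [hexp v, hexp w]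
  rw [Matrix.inner_toEuclideanCLM]
  simp only [map_sum, map_smul, sum_apply, smul_apply, smul_eq_mul, hessian,
    iteratedFDeriv_two_apply, Matrix.cons_val_zero, Matrix.cons_val_one, Matrix.mulVec, dotProduct,
    Finset.mul_sum]
  rw [Finset.sum_comm]
  exact Finset.sum_congr rfl fun i _ => Finset.sum_congr rfl fun j _ => by ring

theorem norm_fderiv_fderiv_sub_le_specNorm (f : EuclideanSpace ℝ (Fin n) → ℝ)
    (y z : EuclideanSpace ℝ (Fin n)) :
    ‖fderiv ℝ (fderiv ℝ f) y - fderiv ℝ (fderiv ℝ f) z‖ ≤ specNorm (hessian f y - hessian f z) := by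
  refine ContinuousLinearMap.opNorm_le_bound₂ _ (specNorm_nonneg _) fun v w => ?_
  rw [sub_apply, sub_apply, fderiv_fderiv_apply_eq_inner_hessian,
    fderiv_fderiv_apply_eq_inner_hessian, ← inner_sub_right, ← sub_apply, ← map_sub,
    Real.norm_eq_abs]
  exact abs_inner_toEuclideanCLM_le_specNorm _ v w

end SpectralNorm

section ModelError

variable {n : ℕ} {f : EuclideanSpace ℝ (Fin n) → ℝ} {x g u : EuclideanSpace ℝ (Fin n)}
  {B : Matrix (Fin n) (Fin n) ℝ} {m : EuclideanSpace ℝ (Fin n) → ℝ}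

theorem model_error_le_of_lipschitz_gradient {Lg : ℝ} (hf : Differentiable ℝ f)
    (hlipg : ∀ y z, ‖gradient f y - gradient f z‖ ≤ Lg * ‖y - z‖)
    (hm : ∀ v, m v = f x + ⟪g, v⟫ + (1 / 2) * ⟪(Matrix.toEuclideanCLM (𝕜 := ℝ) B) v, v⟫)
    (hB : specNorm B ≤ Lg) :
    f (x + u) - m u ≤ ‖g - gradient f x‖ * ‖u‖ + Lg * ‖u‖ ^ 2 := by
  have htaylor := le_taylor_one_of_lipschitz_fderiv hf
    (fun y z => (norm_fderiv_sub_fderiv f y z).trans_le (hlipg y z)) x u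
  have hBu : -⟪(Matrix.toEuclideanCLM (𝕜 := ℝ) B) u, u⟫ ≤ Lg * ‖u‖ ^ 2 := by
    rw [real_inner_comm]
    calc _ ≤ specNorm B * ‖u‖ * ‖u‖ :=
          (neg_le_abs _).trans (abs_inner_toEuclideanCLM_le_specNorm B u u)
      _ ≤ Lg * ‖u‖ ^ 2 := by rw [mul_assoc, ← sq]; gcongr
  rw [hm, ← inner_gradient_left] at *
  linarith [inner_sub_inner_le_norm_sub_mul_norm (gradient f x) g u]

theorem model_error_le_of_lipschitz_hessian {LH : ℝ} (hf : ContDiff ℝ 2 f)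
    (hlipH : ∀ y z, specNorm (hessian f y - hessian f z) ≤ LH * ‖y - z‖)
    (hm : ∀ v, m v = f x + ⟪g, v⟫ + (1 / 2) * ⟪(Matrix.toEuclideanCLM (𝕜 := ℝ) B) v, v⟫) :
    f (x + u) - m u ≤ ‖g - gradient f x‖ * ‖u‖ + 1 / 2 * specNorm (B - hessian f x) * ‖u‖ ^ 2
      + LH / 6 * ‖u‖ ^ 3 := by
  have htaylor := le_taylor_two_of_lipschitz_fderiv_fderiv (hf.differentiable two_ne_zero)
    ((hf.fderiv_right (m := 1) (by norm_num)).differentiable one_ne_zero)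
    (fun y z => (norm_fderiv_fderiv_sub_le_specNorm f y z).trans (hlipH y z)) x u
  have hHB : ⟪u, Matrix.toEuclideanCLM (𝕜 := ℝ) (hessian f x) u⟫
      - ⟪(Matrix.toEuclideanCLM (𝕜 := ℝ) B) u, u⟫ ≤ specNorm (B - hessian f x) * ‖u‖ ^ 2 := by
    rw [real_inner_comm u, ← inner_sub_right, ← sub_apply, ← map_sub, specNorm_sub_comm, sq,
      ← mul_assoc]
    exact le_of_abs_le (abs_inner_toEuclideanCLM_le_specNorm _ u u)
  rw [hm, fderiv_fderiv_apply_eq_inner_hessian, ← inner_gradient_left] at *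
  linarith [inner_sub_inner_le_norm_sub_mul_norm (gradient f x) g u]

end ModelError

section TrustRegion

variable {n : ℕ} {f : EuclideanSpace ℝ (Fin n) → ℝ} {x g u : EuclideanSpace ℝ (Fin n)}
  {B : Matrix (Fin n) (Fin n) ℝ} {m : EuclideanSpace ℝ (Fin n) → ℝ}
  {Lg LH α εg εH D0 Δ Δmax : ℝ}

theorem model_error_le_of_large_gradient (hLg : 0 < Lg) (hf : Differentiable ℝ f)
    (hlipg : ∀ y z, ‖gradient f y - gradient f z‖ ≤ Lg * ‖y - z‖)
    (hα0 : 0 < α) (hα1 : α < 1) (hεg : 0 < εg) (hD0 : 0 ≤ D0) (hΔ : 0 < Δ) (hΔmax : Δ ≤ Δmax)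
    (hm : ∀ v, m v = f x + ⟪g, v⟫ + (1 / 2) * ⟪(Matrix.toEuclideanCLM (𝕜 := ℝ) B) v, v⟫)
    (h1 : ‖g - gradient f x‖ ≤ 2 * Lg * D0 * (Δ / Δmax) ^ 2)
    (h2 : specNorm B ≤ Lg) (h3 : ‖u‖ ≤ Δ)
    (h4 : 1 / 2 * ‖g‖ * min Δ (‖g‖ / Lg) ≤ m 0 - m u) (hg : 4 * εg / 5 < ‖g‖)
    (h6 : Δ ≤ 2 * (1 - α) * εg / (5 * (1 + 2 * (D0 / Δmax)) * Lg)) :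
    f (x + u) - m u ≤ (1 - α) * (m 0 - m u) := by
  have hΔmax0 : 0 < Δmax := hΔ.trans_le hΔmax
  set C := 1 + 2 * (D0 / Δmax) with hC
  have hC1 : 1 ≤ C := by have := div_nonneg hD0 hΔmax0.le; linarith
  have hCΔ : Lg * C * Δ ≤ 2 * (1 - α) * εg / 5 := by
    rw [le_div_iff₀ (by positivity)] at h6; linarith
  have hΔg : Δ ≤ ‖g‖ / Lg := by
    rw [le_div_iff₀ hLg]; nlinarith
  have hdec : 1 / 2 * ‖g‖ * Δ ≤ m 0 - m u := by rwa [min_eq_left hΔg] at h4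
  have hratio : (Δ / Δmax) ^ 2 ≤ Δ / Δmax :=
    pow_le_of_le_one (by positivity) (div_le_one_of_le₀ hΔmax hΔmax0.le) two_ne_zero
  calc f (x + u) - m u ≤ ‖g - gradient f x‖ * ‖u‖ + Lg * ‖u‖ ^ 2 :=
        model_error_le_of_lipschitz_gradient hf hlipg hm h2
    _ ≤ 2 * Lg * D0 * (Δ / Δmax) * Δ + Lg * Δ ^ 2 := by gcongr; exact h1.trans (by gcongr)
    _ = Lg * C * Δ * Δ := by rw [hC]; field_simp; ring
    _ ≤ 2 * (1 - α) * εg / 5 * Δ := by gcongr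
    _ ≤ (1 - α) * (1 / 2 * ‖g‖ * Δ) := by
        nlinarith [mul_pos (mul_pos (sub_pos.2 hα1) hΔ) (sub_pos.2 hg)]
    _ ≤ (1 - α) * (m 0 - m u) := by gcongr

theorem model_error_le_of_negative_curvature (hLg : 0 < Lg) (hLH : 0 < LH) (hf : ContDiff ℝ 2 f)
    (hlipH : ∀ y z, specNorm (hessian f y - hessian f z) ≤ LH * ‖y - z‖)
    (hα1 : α < 1) (hD0 : 0 ≤ D0) (hΔ : 0 < Δ) (hΔmax : Δ ≤ Δmax)
    (hm : ∀ v, m v = f x + ⟪g, v⟫ + (1 / 2) * ⟪(Matrix.toEuclideanCLM (𝕜 := ℝ) B) v, v⟫)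
    (h1 : ‖g - gradient f x‖ ≤ 2 * Lg * D0 * (Δ / Δmax) ^ 2) (h3 : ‖u‖ ≤ Δ)
    (h4 : -lambdaMin B * Δ ^ 2 ≤ m 0 - m u) (hcurv : 4 * εH / 5 < -lambdaMin B)
    (hBH : specNorm (B - hessian f x) ≤ 2 * Lg * (Δ / Δmax))
    (h6 : Δ ≤ 4 * (1 - α) * εH / (5 * (LH / 6 + 2 * (D0 / Δmax + 1) * (Lg / Δmax)))) :
    f (x + u) - m u ≤ (1 - α) * (m 0 - m u) := by
  have hΔmax0 : 0 < Δmax := hΔ.trans_le hΔmax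
  set C := LH / 6 + 2 * (D0 / Δmax + 1) * (Lg / Δmax) with hC
  have hCΔ : C * Δ ≤ 4 * (1 - α) * εH / 5 := by
    rw [le_div_iff₀ (by positivity)] at h6; linarith
  calc f (x + u) - m u ≤ ‖g - gradient f x‖ * ‖u‖
        + 1 / 2 * specNorm (B - hessian f x) * ‖u‖ ^ 2 + LH / 6 * ‖u‖ ^ 3 :=
        model_error_le_of_lipschitz_hessian hf hlipH hm
    _ ≤ 2 * Lg * D0 * (Δ / Δmax) ^ 2 * Δ + 1 / 2 * (2 * Lg * (Δ / Δmax)) * Δ ^ 2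
        + LH / 6 * Δ ^ 3 := by gcongr
    _ ≤ C * Δ * Δ ^ 2 := by
        have : 0 ≤ Lg / Δmax * Δ ^ 3 := by positivity
        rw [hC]; field_simp; nlinarith
    _ ≤ 4 * (1 - α) * εH / 5 * Δ ^ 2 := by gcongr
    _ = (1 - α) * (4 * εH / 5 * Δ ^ 2) := by ring
    _ ≤ (1 - α) * (-lambdaMin B * Δ ^ 2) := by gcongr
    _ ≤ (1 - α) * (m 0 - m u) := by gcongr

end TrustRegion

theorem stmt_13_general {n : ℕ} (f : EuclideanSpace ℝ (Fin n) → ℝ)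
    (Lg LH : ℝ) (hLg : 0 < Lg) (hLH : 0 < LH)
    (hf : ContDiff ℝ 2 f)
    (hlipg : ∀ y z : EuclideanSpace ℝ (Fin n),
      ‖gradient f y - gradient f z‖ ≤ Lg * ‖y - z‖)
    (hlipH : ∀ y z : EuclideanSpace ℝ (Fin n),
      specNorm (hessian f y - hessian f z) ≤ LH * ‖y - z‖)
    (α εg εH D0 Δ Δmax : ℝ) (hα0 : 0 < α) (hα1 : α < 1)
    (hεg : 0 < εg) (hD0 : 0 ≤ D0)
    (hΔ : 0 < Δ) (hΔmax : Δ ≤ Δmax)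
    (x g u : EuclideanSpace ℝ (Fin n))
    (B : Matrix (Fin n) (Fin n) ℝ)
    (m : EuclideanSpace ℝ (Fin n) → ℝ)
    (hm : ∀ v, m v = f x + ⟪g, v⟫
      + (1 / 2) * ⟪(Matrix.toEuclideanCLM (𝕜 := ℝ) B) v, v⟫)
    (h1 : ‖g - gradient f x‖ ≤ 2 * Lg * D0 * (Δ / Δmax) ^ 2)
    (h2 : specNorm B ≤ Lg)
    (h3 : ‖u‖ ≤ Δ)
    (h4 : m 0 - m u ≥ max (1 / 2 * ‖g‖ * min Δ (‖g‖ / Lg)) (-lambdaMin B * Δ ^ 2))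
    (h5 : 4 * εg / 5 < ‖g‖ ∨
      (4 * εH / 5 < -lambdaMin B ∧ specNorm (B - hessian f x) ≤ 2 * Lg * (Δ / Δmax)))
    (h6 : Δ ≤ min (2 * (1 - α) * εg / (5 * (1 + 2 * (D0 / Δmax)) * Lg))
      (4 * (1 - α) * εH / (5 * (LH / 6 + 2 * (D0 / Δmax + 1) * (Lg / Δmax))))) :
    f x - f (x + u) ≥ α * (m 0 - m u) := by
  have hm0 : m 0 = f x := by simp [hm]
  suffices f (x + u) - m u ≤ (1 - α) * (m 0 - m u) by linarith
  rcases h5 with hg | ⟨hcurv, hBH⟩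
  · exact model_error_le_of_large_gradient hLg (hf.differentiable two_ne_zero) hlipg hα0 hα1 hεg
      hD0 hΔ hΔmax hm h1 h2 h3 (le_of_max_le_left h4) hg (h6.trans (min_le_left _ _))
  · exact model_error_le_of_negative_curvature hLg hLH hf hlipH hα1 hD0 hΔ hΔmax hm h1 h3
      (le_of_max_le_right h4) hcurv hBH (h6.trans (min_le_right _ _))

theorem stmt_13 {n : ℕ} (f : EuclideanSpace ℝ (Fin n) → ℝ)
    (Lg LH : ℝ) (hLg : 0 < Lg) (hLH : 0 < LH)
    (hf : ContDiff ℝ 2 f)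
    (hlipg : ∀ y z : EuclideanSpace ℝ (Fin n),
      ‖gradient f y - gradient f z‖ ≤ Lg * ‖y - z‖)
    (hlipH : ∀ y z : EuclideanSpace ℝ (Fin n),
      specNorm (hessian f y - hessian f z) ≤ LH * ‖y - z‖)
    (α εg εH D0 Δ Δmax : ℝ) (hα0 : 0 < α) (hα1 : α < 1)
    (hεg : 0 < εg) (hεH : 0 < εH) (hD0 : 0 ≤ D0)
    (hΔ : 0 < Δ) (hΔmax : Δ ≤ Δmax)
    (x g u : EuclideanSpace ℝ (Fin n))
    (B : Matrix (Fin n) (Fin n) ℝ) (hB : B.IsHermitian)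
    (m : EuclideanSpace ℝ (Fin n) → ℝ)
    (hm : ∀ v, m v = f x + ⟪g, v⟫
      + (1 / 2) * ⟪(Matrix.toEuclideanCLM (𝕜 := ℝ) B) v, v⟫)
    (h1 : ‖g - gradient f x‖ ≤ 2 * Lg * D0 * (Δ / Δmax) ^ 2)
    (h2 : specNorm B ≤ Lg)
    (h3 : ‖u‖ ≤ Δ)
    (h4 : m 0 - m u ≥ max (1 / 2 * ‖g‖ * min Δ (‖g‖ / Lg)) (-lambdaMin B * Δ ^ 2))
    (h5 : 4 * εg / 5 < ‖g‖ ∨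
      (4 * εH / 5 < -lambdaMin B ∧ specNorm (B - hessian f x) ≤ 2 * Lg * (Δ / Δmax)))
    (h6 : Δ ≤ min (2 * (1 - α) * εg / (5 * (1 + 2 * (D0 / Δmax)) * Lg))
      (4 * (1 - α) * εH / (5 * (LH / 6 + 2 * (D0 / Δmax + 1) * (Lg / Δmax))))) :
    f x - f (x + u) ≥ α * (m 0 - m u) :=
  stmt_13_general f Lg LH hLg hLH hf hlipg hlipH α εg εH D0 Δ Δmax hα0 hα1 hεg hD0 hΔ hΔmax x g u B
    m hm h1 h2 h3 h4 h5 h6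
end
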